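/- arXiv:cs/0410045 — 5 statements merged into one kernel-verified Lean document; each statement's English description precedes it below -/
import Mathlib

section
/- If the weight matrix [A_I, A_B] satisfies A_I e_I + A_B e_B = 0, A_I x_I + A_B x_B = 0, and A_I y_I + A_B y_B = 0 (affine-combination conditions), A_I is nonsingular, and the deformed boundary coordinates are given by an affine map (x̂_j, ŷ_j)ᵀ = L(x_j, y_j)ᵀ + v for a nonsingular 2×2 matrix L and vector v applied to each boundary node j, then the interior coordinates computed by solving A_I[x̂_I, ŷ_I] = -A_B[x̂_B, ŷ_B] satisfy (x̂_i, ŷ_i)ᵀ = L(x_i, y_i)ᵀ + v for every interior node i. -/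
/-!
Each coordinate of the affine image is `c x + d y + e`, and the pairs `(z_I, z_B)` with
`A_I z_I + A_B z_B = 0` form a linear space containing `(x_I, x_B)`, `(y_I, y_B)` and
`(e_I, e_B)`. So the affine image of the interior nodes solves the same system as the computed
positions, and nonsingularity of `A_I` makes that solution unique.
-/

open Matrix

section

variable {R m n : Type*} [CommRing R] [Fintype m] [Fintype n] [DecidableEq m]
  {A : Matrix m m R} {B : Matrix m n R}

theorem eq_of_mulVec_add_mulVec_eq_zero (hA : IsUnit A.det) {z w : m → R} {zB : n → R}
    (hz : A *ᵥ z + B *ᵥ zB = 0) (hw : A *ᵥ w = -(B *ᵥ zB)) : w = z := by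
  apply mulVec_injective_of_isUnit ((isUnit_iff_isUnit_det A).mpr hA)
  rw [hw, eq_neg_of_add_eq_zero_left hz]

omit [DecidableEq m] in
theorem mulVec_add_mulVec_affineComb_eq_zero {x y : m → R} {xB yB : n → R}
    (hones : A *ᵥ (fun _ => 1) + B *ᵥ (fun _ => 1) = 0)
    (hx : A *ᵥ x + B *ᵥ xB = 0) (hy : A *ᵥ y + B *ᵥ yB = 0) (c d e : R) :
    A *ᵥ (c • x + d • y + e • fun _ => 1) + B *ᵥ (c • xB + d • yB + e • fun _ => 1) = 0 := by
  simp only [mulVec_add, mulVec_smul]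
  linear_combination (norm := module) c • hx + d • hy + e • hones

theorem eq_affineComb_of_boundary_eq_affineComb (hA : IsUnit A.det) {x y z : m → R}
    {xB yB zB : n → R}
    (hones : A *ᵥ (fun _ => 1) + B *ᵥ (fun _ => 1) = 0)
    (hx : A *ᵥ x + B *ᵥ xB = 0) (hy : A *ᵥ y + B *ᵥ yB = 0) {c d e : R}
    (hzB : ∀ j, zB j = c * xB j + d * yB j + e) (hz : A *ᵥ z = -(B *ᵥ zB)) :
    ∀ i, z i = c * x i + d * y i + e := by
  have hzB' : zB = c • xB + d • yB + e • fun _ => 1 := by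
    ext j
    simp [hzB j]
  subst hzB'
  have hsol := mulVec_add_mulVec_affineComb_eq_zero hones hx hy c d e
  intro i
  simpa using congrFun (eq_of_mulVec_add_mulVec_eq_zero hA hsol hz) i

end

theorem lwls_exact_for_affine_general
    (m b : ℕ)
    (AI : Matrix (Fin m) (Fin m) ℝ) (AB : Matrix (Fin m) (Fin b) ℝ)
    (xI yI : Fin m → ℝ) (xB yB : Fin b → ℝ)
    (hones : AI *ᵥ (fun _ => (1:ℝ)) + AB *ᵥ (fun _ => (1:ℝ)) = 0)
    (hx : AI *ᵥ xI + AB *ᵥ xB = 0)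
    (hy : AI *ᵥ yI + AB *ᵥ yB = 0)
    (hAI : IsUnit AI.det)
    (L : Matrix (Fin 2) (Fin 2) ℝ) (v : Fin 2 → ℝ)
    (xhB yhB : Fin b → ℝ)
    (hbx : ∀ j, xhB j = L 0 0 * xB j + L 0 1 * yB j + v 0)
    (hby : ∀ j, yhB j = L 1 0 * xB j + L 1 1 * yB j + v 1)
    (xhI yhI : Fin m → ℝ)
    (hsolx : AI *ᵥ xhI = -(AB *ᵥ xhB))
    (hsoly : AI *ᵥ yhI = -(AB *ᵥ yhB)) :
    ∀ i, xhI i = L 0 0 * xI i + L 0 1 * yI i + v 0 ∧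
         yhI i = L 1 0 * xI i + L 1 1 * yI i + v 1 := fun i =>
  ⟨eq_affineComb_of_boundary_eq_affineComb hAI hones hx hy hbx hsolx i,
    eq_affineComb_of_boundary_eq_affineComb hAI hones hx hy hby hsoly i⟩

/-- Exactness of LWLS methods for affine boundary transformations:
if the weights express interior nodes as affine combinations of neighbors,
`A_I` is nonsingular, and the boundary deformation is the affine map
`p ↦ L p + v`, then the computed interior deformation agrees with the same
affine map applied to each interior node. -/
theorem lwls_exact_for_affine
    (m b : ℕ)
    (AI : Matrix (Fin m) (Fin m) ℝ) (AB : Matrix (Fin m) (Fin b) ℝ)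
    (xI yI : Fin m → ℝ) (xB yB : Fin b → ℝ)
    (hones : AI *ᵥ (fun _ => (1:ℝ)) + AB *ᵥ (fun _ => (1:ℝ)) = 0)
    (hx : AI *ᵥ xI + AB *ᵥ xB = 0)
    (hy : AI *ᵥ yI + AB *ᵥ yB = 0)
    (hAI : IsUnit AI.det)
    (L : Matrix (Fin 2) (Fin 2) ℝ) (hL : IsUnit L.det) (v : Fin 2 → ℝ)
    (xhB yhB : Fin b → ℝ)
    (hbx : ∀ j, xhB j = L 0 0 * xB j + L 0 1 * yB j + v 0)
    (hby : ∀ j, yhB j = L 1 0 * xB j + L 1 1 * yB j + v 1)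
    (xhI yhI : Fin m → ℝ)
    (hsolx : AI *ᵥ xhI = -(AB *ᵥ xhB))
    (hsoly : AI *ᵥ yhI = -(AB *ᵥ yhB)) :
    ∀ i, xhI i = L 0 0 * xI i + L 0 1 * yI i + v 0 ∧
         yhI i = L 1 0 * xI i + L 1 1 * yI i + v 1 :=
  lwls_exact_for_affine_general m b AI AB xI yI xB yB hones hx hy hAI L v xhB yhB hbx hby xhI yhI
    hsolx hsoly
end

section
/- If A_I is an irreducibly diagonally dominant matrix, then the Gauss–Seidel iteration for solving A_I X = B converges for any initial guess (the spectral radius of the Gauss–Seidel iteration matrix is strictly less than 1). -/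
open Matrix Filter Finset

/-- A square matrix is irreducible if the directed graph with an edge `i → j`
whenever `A i j ≠ 0` is strongly connected. -/
def MatrixIrreducible {n : ℕ} (A : Matrix (Fin n) (Fin n) ℝ) : Prop :=
  ∀ i j : Fin n, i ≠ j → Relation.TransGen (fun a b => A a b ≠ 0) i j

/-- The lower-plus-diagonal part `D + L` of a square matrix. -/
def lowerDiagPart {n : ℕ} (A : Matrix (Fin n) (Fin n) ℝ) : Matrix (Fin n) (Fin n) ℝ :=
  Matrix.of fun i j => if j ≤ i then A i j else 0

/-- The strictly upper part `U` of a square matrix. -/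
def upperPart {n : ℕ} (A : Matrix (Fin n) (Fin n) ℝ) : Matrix (Fin n) (Fin n) ℝ :=
  Matrix.of fun i j => if i < j then A i j else 0

/-!
An irreducibly diagonally dominant matrix is nonsingular (Taussky): at a coordinate of maximal
modulus of a kernel vector the dominance inequality must be an equality, and this forces every
neighbour in the graph of the matrix to have maximal modulus too. By irreducibility all coordinates
then have the same modulus, and the strictly dominant row gives a contradiction.

If `μ` with `‖μ‖ ≥ 1` were an eigenvalue of `G = -(D+L)⁻¹U`, then `μ(D+L) + U` would be singular;
but scaling the lower part by `μ` keeps the matrix irreducibly diagonally dominant. Hence the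
spectrum of `G` lies in the open unit disc, Gelfand's formula gives `G^k → 0`, and the error
`X k - A⁻¹B = G^k (X 0 - A⁻¹B)` tends to zero.
-/

namespace Matrix

variable {ι K : Type*} [Fintype ι] [DecidableEq ι] [NormedField K]

structure IsIrreduciblyDiagDominant (C : Matrix ι ι K) : Prop where
  transGen_ne_zero : ∀ i j, i ≠ j → Relation.TransGen (fun a b => C a b ≠ 0) i j
  sum_row_le_diag : ∀ i, ∑ j ∈ univ.erase i, ‖C i j‖ ≤ ‖C i i‖
  exists_sum_row_lt_diag : ∃ i, ∑ j ∈ univ.erase i, ‖C i j‖ < ‖C i i‖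

section KernelVector

variable {C : Matrix ι ι K} {v : ι → K}

lemma norm_diag_mul_le_of_mulVec_eq_zero (hv : C *ᵥ v = 0) (i : ι) :
    ‖C i i‖ * ‖v i‖ ≤ ∑ j ∈ univ.erase i, ‖C i j‖ * ‖v j‖ := by
  have hrow : C i i * v i = -∑ j ∈ univ.erase i, C i j * v j := by
    rw [eq_neg_iff_add_eq_zero, add_sum_erase _ (fun j => C i j * v j) (mem_univ i)]
    exact congrFun hv i
  calc ‖C i i‖ * ‖v i‖ = ‖∑ j ∈ univ.erase i, C i j * v j‖ := by rw [← norm_mul, hrow, norm_neg]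
    _ ≤ ∑ j ∈ univ.erase i, ‖C i j‖ * ‖v j‖ := norm_sum_le_of_le _ fun j _ => (norm_mul _ _).le

lemma norm_eq_of_mulVec_eq_zero_of_ne_zero (hv : C *ᵥ v = 0) {i j : ι}
    (hmax : ∀ k, ‖v k‖ ≤ ‖v i‖) (hdom : ∑ k ∈ univ.erase i, ‖C i k‖ ≤ ‖C i i‖)
    (hij : C i j ≠ 0) : ‖v j‖ = ‖v i‖ := by
  by_contra hne
  have hji : j ∈ univ.erase i := mem_erase.2 ⟨fun h => hne (h ▸ rfl), mem_univ j⟩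
  have hlt : ∑ k ∈ univ.erase i, ‖C i k‖ * ‖v k‖ < ∑ k ∈ univ.erase i, ‖C i k‖ * ‖v i‖ :=
    sum_lt_sum (fun k _ => mul_le_mul_of_nonneg_left (hmax k) (norm_nonneg _))
      ⟨j, hji, mul_lt_mul_of_pos_left ((hmax j).lt_of_ne hne) (norm_pos_iff.2 hij)⟩
  have hle : ∑ k ∈ univ.erase i, ‖C i k‖ * ‖v i‖ ≤ ‖C i i‖ * ‖v i‖ := by
    rw [← sum_mul]; exact mul_le_mul_of_nonneg_right hdom (norm_nonneg _)
  linarith [norm_diag_mul_le_of_mulVec_eq_zero hv i]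

lemma norm_diag_le_sum_row_of_mulVec_eq_zero (hv : C *ᵥ v = 0) {i : ι}
    (hmax : ∀ k, ‖v k‖ ≤ ‖v i‖) (hvi : v i ≠ 0) : ‖C i i‖ ≤ ∑ j ∈ univ.erase i, ‖C i j‖ := by
  refine le_of_mul_le_mul_right ?_ (norm_pos_iff.2 hvi)
  calc ‖C i i‖ * ‖v i‖ ≤ ∑ j ∈ univ.erase i, ‖C i j‖ * ‖v j‖ :=
        norm_diag_mul_le_of_mulVec_eq_zero hv i
    _ ≤ (∑ j ∈ univ.erase i, ‖C i j‖) * ‖v i‖ := by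
        rw [sum_mul]; exact sum_le_sum fun j _ => mul_le_mul_of_nonneg_left (hmax j) (norm_nonneg _)

end KernelVector

namespace IsIrreduciblyDiagDominant

variable {C : Matrix ι ι K}

lemma norm_eq_of_mulVec_eq_zero (hC : C.IsIrreduciblyDiagDominant) {v : ι → K}
    (hv : C *ᵥ v = 0) {i : ι} (hmax : ∀ k, ‖v k‖ ≤ ‖v i‖) (j : ι) : ‖v j‖ = ‖v i‖ := by
  rcases eq_or_ne i j with rfl | hij
  · rfl
  have hpath := hC.transGen_ne_zero i j hij
  clear hij
  induction hpath with
  | single h => exact norm_eq_of_mulVec_eq_zero_of_ne_zero hv hmax (hC.sum_row_le_diag i) h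
  | tail _ h ih =>
    exact (norm_eq_of_mulVec_eq_zero_of_ne_zero hv (fun k => ih ▸ hmax k)
      (hC.sum_row_le_diag _) h).trans ih

theorem det_ne_zero (hC : C.IsIrreduciblyDiagDominant) : C.det ≠ 0 := by
  intro hdet
  obtain ⟨v, hv0, hv⟩ := exists_mulVec_eq_zero_iff.2 hdet
  obtain ⟨i₀, hi₀⟩ := hC.exists_sum_row_lt_diag
  obtain ⟨i, -, hmax⟩ := exists_max_image univ (fun k => ‖v k‖) ⟨i₀, mem_univ _⟩
  have hmax : ∀ k, ‖v k‖ ≤ ‖v i‖ := fun k => hmax k (mem_univ k)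
  have hflat := hC.norm_eq_of_mulVec_eq_zero hv hmax
  obtain ⟨j, hj⟩ := Function.ne_iff.1 hv0
  have hvi₀ : v i₀ ≠ 0 := by
    rw [← norm_ne_zero_iff, hflat, ← hflat j]; exact norm_ne_zero_iff.2 hj
  exact hi₀.not_ge (norm_diag_le_sum_row_of_mulVec_eq_zero hv (fun k => hflat i₀ ▸ hmax k) hvi₀)

lemma diag_ne_zero (hC : C.IsIrreduciblyDiagDominant) (i : ι) : C i i ≠ 0 := by
  intro hii
  have hrow : ∀ j ∈ univ.erase i, C i j = 0 := by
    have := hC.sum_row_le_diag i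
    rw [hii, norm_zero] at this
    intro j hj
    exact norm_eq_zero.1 ((sum_eq_zero_iff_of_nonneg fun _ _ => norm_nonneg _).1
      (this.antisymm (sum_nonneg fun _ _ => norm_nonneg _)) j hj)
  obtain ⟨i₀, hi₀⟩ := hC.exists_sum_row_lt_diag
  rcases eq_or_ne i i₀ with rfl | hne
  · rw [hii, norm_zero, sum_eq_zero fun j hj => by rw [hrow j hj, norm_zero]] at hi₀
    exact hi₀.false
  · obtain ⟨j, hij, -⟩ := Relation.TransGen.head'_iff.1 (hC.transGen_ne_zero i i₀ hne)
    exact hij (if h : j = i then h ▸ hii else hrow j (mem_erase.2 ⟨h, mem_univ j⟩))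

lemma of_norm_le {L : Type*} [NormedField L] (hC : C.IsIrreduciblyDiagDominant)
    {D : Matrix ι ι L} {r : ℝ} (hr : 0 < r) (hne : ∀ i j, C i j ≠ 0 → D i j ≠ 0)
    (hdiag : ∀ i, ‖D i i‖ = r * ‖C i i‖) (hle : ∀ i j, ‖D i j‖ ≤ r * ‖C i j‖) :
    D.IsIrreduciblyDiagDominant := by
  have hsum : ∀ i, ∑ j ∈ univ.erase i, ‖D i j‖ ≤ r * ∑ j ∈ univ.erase i, ‖C i j‖ := fun i => by
    rw [mul_sum]; exact sum_le_sum fun j _ => hle i j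
  obtain ⟨i₀, hi₀⟩ := hC.exists_sum_row_lt_diag
  refine ⟨fun i j hij => Relation.TransGen.mono (fun a b => hne a b) _ _
    (hC.transGen_ne_zero i j hij), fun i => ?_, ⟨i₀, ?_⟩⟩
  · exact (hsum i).trans ((hdiag i).symm ▸ mul_le_mul_of_nonneg_left (hC.sum_row_le_diag i) hr.le)
  · exact (hsum i₀).trans_lt ((hdiag i₀).symm ▸ mul_lt_mul_of_pos_left hi₀ hr)

end IsIrreduciblyDiagDominant

lemma det_smul_add_eq_zero_of_mem_spectrum {F : Type*} [Field F] {L U G : Matrix ι ι F}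
    (hG : L * G = -U) {μ : F} (hμ : μ ∈ spectrum F G) : (μ • L + U).det = 0 := by
  have hsing : (algebraMap F (Matrix ι ι F) μ - G).det = 0 := by
    by_contra h
    exact spectrum.mem_iff.1 hμ ((isUnit_iff_isUnit_det _).2 (isUnit_iff_ne_zero.2 h))
  have hfactor : L * (algebraMap F (Matrix ι ι F) μ - G) = μ • L + U := by
    rw [mul_sub, hG, Algebra.algebraMap_eq_smul_one, mul_smul_comm, mul_one, sub_neg_eq_add]
  rw [← hfactor, det_mul, hsing, mul_zero]

lemma sub_eq_mulVec_sub_of_add_eq {R : Type*} [CommRing R] {L U A : Matrix ι ι R}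
    (hLU : L + U = A) (hL : IsUnit L.det) {b x : ι → R} (hx : A *ᵥ x = b) (y : ι → R) :
    L⁻¹ *ᵥ (b - U *ᵥ y) - x = -(L⁻¹ * U) *ᵥ (y - x) := by
  have hLx : L *ᵥ x = b - U *ᵥ x := by rw [← hx, ← hLU, add_mulVec, add_sub_cancel_right]
  calc L⁻¹ *ᵥ (b - U *ᵥ y) - x = L⁻¹ *ᵥ (b - U *ᵥ y) - L⁻¹ *ᵥ (L *ᵥ x) := by
        rw [mulVec_mulVec, nonsing_inv_mul L hL, one_mulVec]
    _ = L⁻¹ *ᵥ (U *ᵥ (x - y)) := by rw [hLx, ← mulVec_sub, sub_sub_sub_cancel_left, ← mulVec_sub]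
    _ = -(L⁻¹ * U) *ᵥ (y - x) := by rw [mulVec_mulVec, neg_mulVec, ← mulVec_neg, neg_sub]

lemma tendsto_of_sub_eq_mulVec_sub {R : Type*} [CommRing R] [TopologicalSpace R]
    [IsTopologicalRing R] {G : Matrix ι ι R} (hG : Tendsto (G ^ ·) atTop (nhds 0))
    {X : ℕ → ι → R} {x : ι → R} (hX : ∀ k, X (k + 1) - x = G *ᵥ (X k - x)) :
    Tendsto X atTop (nhds x) := by
  have herr : ∀ k, X k - x = (G ^ k) *ᵥ (X 0 - x) := by
    intro k
    induction k with
    | zero => rw [pow_zero, one_mulVec]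
    | succ k ih => rw [hX, ih, mulVec_mulVec, ← pow_succ']
  have hcont : Continuous fun M : Matrix ι ι R => M *ᵥ (X 0 - x) :=
    continuous_id.matrix_mulVec continuous_const
  have hlim := (hcont.tendsto 0).comp hG
  rw [Function.comp_def, zero_mulVec] at hlim
  exact tendsto_sub_nhds_zero_iff.1 (hlim.congr fun k => (herr k).symm)

end Matrix

theorem tendsto_pow_atTop_nhds_zero_of_spectralRadius_lt_one {A : Type*} [NormedRing A]
    [NormedAlgebra ℂ A] [CompleteSpace A] {a : A} (h : spectralRadius ℂ a < 1) :
    Tendsto (a ^ ·) atTop (nhds 0) := by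
  obtain ⟨c, hc1, hc2⟩ := ENNReal.lt_iff_exists_nnreal_btwn.1 h
  have hpow : ∀ᶠ k : ℕ in atTop, ‖a ^ k‖ ≤ (c : ℝ) ^ k := by
    filter_upwards [(spectrum.pow_nnnorm_pow_one_div_tendsto_nhds_spectralRadius a)
      |>.eventually_lt_const hc1, eventually_ge_atTop 1] with k hk hk1
    have hk' := ENNReal.rpow_lt_rpow hk (by positivity : (0 : ℝ) < k)
    rw [← ENNReal.rpow_mul, one_div, inv_mul_cancel₀ (by positivity), ENNReal.rpow_one,
      ENNReal.rpow_natCast, ← ENNReal.coe_pow, ENNReal.coe_lt_coe] at hk'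
    exact_mod_cast hk'.le
  refine tendsto_zero_iff_norm_tendsto_zero.2 (squeeze_zero'
    (Eventually.of_forall fun k => norm_nonneg _) hpow
    (tendsto_pow_atTop_nhds_zero_of_lt_one c.coe_nonneg ?_))
  exact_mod_cast hc2

attribute [local instance] Matrix.linftyOpNormedRing Matrix.linftyOpNormedAlgebra in
theorem Matrix.tendsto_pow_atTop_nhds_zero_of_forall_norm_lt_one {ι : Type*} [Fintype ι]
    [DecidableEq ι] {M : Matrix ι ι ℝ} (h : ∀ μ ∈ spectrum ℂ (M.map ((↑) : ℝ → ℂ)), ‖μ‖ < 1) :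
    Tendsto (M ^ ·) atTop (nhds 0) := by
  rcases isEmpty_or_nonempty ι with hι | hι
  · exact tendsto_const_nhds.congr fun k => Subsingleton.elim _ _
  have hρ : spectralRadius ℂ (M.map ((↑) : ℝ → ℂ)) < 1 := by
    simpa using spectrum.spectralRadius_lt_of_forall_lt (r := 1) _
      fun μ hμ => by exact_mod_cast h μ hμ
  have hre : Continuous fun N : Matrix ι ι ℂ => N.map Complex.re :=
    continuous_id.matrix_map Complex.continuous_re
  have hlim := (hre.tendsto 0).comp (tendsto_pow_atTop_nhds_zero_of_spectralRadius_lt_one hρ)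
  refine (hlim.congr fun k => ?_).trans (by rw [Matrix.map_zero _ Complex.zero_re])
  change ((Complex.ofRealHom.mapMatrix M) ^ k).map Complex.re = M ^ k
  rw [← map_pow]
  ext i j
  simp

section GaussSeidel

variable {n : ℕ}

lemma lowerDiagPart_add_upperPart (A : Matrix (Fin n) (Fin n) ℝ) :
    lowerDiagPart A + upperPart A = A := by
  ext i j
  simp only [lowerDiagPart, upperPart, Matrix.add_apply, of_apply]
  rcases le_or_gt j i with h | h
  · rw [if_pos h, if_neg h.not_gt, add_zero]
  · rw [if_neg h.not_ge, if_pos h, zero_add]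

lemma det_lowerDiagPart (A : Matrix (Fin n) (Fin n) ℝ) : (lowerDiagPart A).det = ∏ i, A i i := by
  rw [det_of_isLowerTriangular]
  · simp [lowerDiagPart]
  · intro i j h
    exact if_neg (OrderDual.toDual_lt_toDual.1 h).not_ge

lemma isUnit_det_lowerDiagPart {A : Matrix (Fin n) (Fin n) ℝ}
    (hA : A.IsIrreduciblyDiagDominant) : IsUnit (lowerDiagPart A).det := by
  rw [det_lowerDiagPart, isUnit_iff_ne_zero, prod_ne_zero_iff]
  exact fun i _ => hA.diag_ne_zero i

noncomputable def gaussSeidelMatrix (A : Matrix (Fin n) (Fin n) ℝ) : Matrix (Fin n) (Fin n) ℝ :=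
  -((lowerDiagPart A)⁻¹ * upperPart A)

lemma Matrix.IsIrreduciblyDiagDominant.smul_lowerDiagPart_add_upperPart
    {A : Matrix (Fin n) (Fin n) ℝ} (hA : A.IsIrreduciblyDiagDominant) {μ : ℂ} (hμ : 1 ≤ ‖μ‖) :
    (μ • (lowerDiagPart A).map ((↑) : ℝ → ℂ) +
      (upperPart A).map ((↑) : ℝ → ℂ)).IsIrreduciblyDiagDominant := by
  have hentry : ∀ i j, (μ • (lowerDiagPart A).map ((↑) : ℝ → ℂ) +
      (upperPart A).map ((↑) : ℝ → ℂ)) i j = if j ≤ i then μ * A i j else A i j := by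
    intro i j
    by_cases h : j ≤ i <;> simp [lowerDiagPart, upperPart, h]
  have hμ0 : μ ≠ 0 := norm_pos_iff.1 (zero_lt_one.trans_le hμ)
  refine hA.of_norm_le (zero_lt_one.trans_le hμ) (fun i j hij => ?_) (fun i => ?_)
    (fun i j => ?_) <;> rw [hentry]
  · split_ifs <;> simp [hμ0, hij]
  · simp
  · split_ifs
    · simp
    · simpa using le_mul_of_one_le_left (norm_nonneg (A i j)) hμ

theorem Matrix.IsIrreduciblyDiagDominant.norm_lt_one_of_mem_spectrum_gaussSeidelMatrix
    {A : Matrix (Fin n) (Fin n) ℝ} (hA : A.IsIrreduciblyDiagDominant) {μ : ℂ}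
    (hμ : μ ∈ spectrum ℂ ((gaussSeidelMatrix A).map ((↑) : ℝ → ℂ))) : ‖μ‖ < 1 := by
  by_contra! hge
  refine (hA.smul_lowerDiagPart_add_upperPart hge).det_ne_zero
    (det_smul_add_eq_zero_of_mem_spectrum ?_ hμ)
  change Complex.ofRealHom.mapMatrix _ * Complex.ofRealHom.mapMatrix _ =
    -Complex.ofRealHom.mapMatrix _
  rw [← map_mul, ← map_neg, gaussSeidelMatrix, Matrix.mul_neg, ← Matrix.mul_assoc,
    mul_nonsing_inv _ (isUnit_det_lowerDiagPart hA), Matrix.one_mul]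

end GaussSeidel

theorem gaussSeidel_converges_of_irreducibly_diagonally_dominant_general
    (n : ℕ) (A : Matrix (Fin n) (Fin n) ℝ)
    (hirr : MatrixIrreducible A)
    (hdom : ∀ i, ∑ j ∈ Finset.univ.erase i, |A i j| ≤ |A i i|)
    (hstrict : ∃ i, ∑ j ∈ Finset.univ.erase i, |A i j| < |A i i|)
    (B : Fin n → ℝ)
    (X : ℕ → Fin n → ℝ)
    (hXrec : ∀ k, X (k + 1) = (lowerDiagPart A)⁻¹ *ᵥ (B - upperPart A *ᵥ X k)) :
    Tendsto X atTop (nhds (A⁻¹ *ᵥ B)) ∧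
    (∀ μ : ℂ, μ ∈ spectrum ℂ ((-((lowerDiagPart A)⁻¹ * upperPart A)).map (fun x : ℝ => (x : ℂ))) →
      ‖μ‖ < 1) := by
  have hA : A.IsIrreduciblyDiagDominant := ⟨hirr, hdom, hstrict⟩
  have hspec : ∀ μ ∈ spectrum ℂ ((gaussSeidelMatrix A).map ((↑) : ℝ → ℂ)), ‖μ‖ < 1 :=
    fun μ => hA.norm_lt_one_of_mem_spectrum_gaussSeidelMatrix
  have hsol : A *ᵥ (A⁻¹ *ᵥ B) = B := by
    rw [mulVec_mulVec, mul_nonsing_inv A (isUnit_iff_ne_zero.2 hA.det_ne_zero), one_mulVec]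
  refine ⟨tendsto_of_sub_eq_mulVec_sub (tendsto_pow_atTop_nhds_zero_of_forall_norm_lt_one hspec)
    fun k => ?_, hspec⟩
  rw [hXrec k]
  exact sub_eq_mulVec_sub_of_add_eq (lowerDiagPart_add_upperPart A) (isUnit_det_lowerDiagPart hA)
    hsol (X k)

/-- If `A` is irreducibly diagonally dominant, then the Gauss–Seidel iteration
for `A X = B` converges from any initial guess; the spectral radius of the
Gauss–Seidel iteration matrix `-(D+L)⁻¹ U` is strictly less than 1. -/
theorem gaussSeidel_converges_of_irreducibly_diagonally_dominant
    (n : ℕ) (A : Matrix (Fin n) (Fin n) ℝ)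
    (hirr : MatrixIrreducible A)
    (hdom : ∀ i, ∑ j ∈ Finset.univ.erase i, |A i j| ≤ |A i i|)
    (hstrict : ∃ i, ∑ j ∈ Finset.univ.erase i, |A i j| < |A i i|)
    (B X0 : Fin n → ℝ)
    (X : ℕ → Fin n → ℝ)
    (hX0 : X 0 = X0)
    (hXrec : ∀ k, X (k + 1) = (lowerDiagPart A)⁻¹ *ᵥ (B - upperPart A *ᵥ X k)) :
    Tendsto X atTop (nhds (A⁻¹ *ᵥ B)) ∧
    (∀ μ : ℂ, μ ∈ spectrum ℂ ((-((lowerDiagPart A)⁻¹ * upperPart A)).map (fun x : ℝ => (x : ℂ))) →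
      ‖μ‖ < 1) :=
  gaussSeidel_converges_of_irreducibly_diagonally_dominant_general n A hirr hdom hstrict B X hXrec
end

section
/- Let f: Ω → ℝ² be C² on a domain Ω ⊆ ℝ² with ∇f nonsingular everywhere and ∇f orientation-preserving (positive Jacobian determinant). Let T ⊆ Ω be a triangle with vertices v₁, v₂, v₃ listed in positive orientation, with maximum side length h, minimum altitude minalt(T), and aspect ratio asp(T) = h / minalt(T). Let M be an upper bound for ‖∇²f‖ on T. If σ_min(∇f(v₁)) / M > 2 h · asp(T), then the triangle with vertices f(v₁), f(v₂), f(v₃) is also positively oriented (not reversed). -/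
noncomputable section

abbrev E2 : Type := EuclideanSpace ℝ (Fin 2)

/-- Smallest singular value of a continuous linear map on `ℝ²`:
the infimum of `‖B x‖` over unit vectors `x`. -/
def sminCLM (B : E2 →L[ℝ] E2) : ℝ :=
  sInf {r : ℝ | ∃ x : E2, ‖x‖ = 1 ∧ r = ‖B x‖}

/-- Orientation determinant `det (v₂ − v₁, v₃ − v₁)` of a triangle. -/
def triDet (v₁ v₂ v₃ : E2) : ℝ :=
  (v₂ - v₁) 0 * (v₃ - v₁) 1 - (v₂ - v₁) 1 * (v₃ - v₁) 0

/-- Maximum side length of a triangle. -/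
def maxSide (v₁ v₂ v₃ : E2) : ℝ :=
  max (dist v₁ v₂) (max (dist v₂ v₃) (dist v₁ v₃))

/-- Minimum altitude of a triangle: the least distance from a vertex to the
affine span of the opposite edge. -/
def minAlt (v₁ v₂ v₃ : E2) : ℝ :=
  min (Metric.infDist v₁ (affineSpan ℝ {v₂, v₃} : Set E2))
    (min (Metric.infDist v₂ (affineSpan ℝ {v₁, v₃} : Set E2))
      (Metric.infDist v₃ (affineSpan ℝ {v₁, v₂} : Set E2)))

/-- Aspect ratio: maximum side length divided by minimum altitude. -/
def aspectRatio (v₁ v₂ v₃ : E2) : ℝ := maxSide v₁ v₂ v₃ / minAlt v₁ v₂ v₃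

/-!
Let `A = Df(v₁)`, `σ = σ_min(A)`, `h` the longest side and `m` the shortest altitude. By Taylor's
theorem `f vᵢ - f v₁` is within `M h² / 2` of `A (vᵢ - v₁)`, so the preimages under `A` of the image
edges are within `r = M h² / (2σ)` of the edges `vᵢ - v₁`; the hypothesis is exactly `4 r < m`.
The orientation determinant of `T` is twice its area, hence at least `m h`, while moving both edges
by at most `r` changes it by at most `2 h r + r² < m h`. Finally `det A > 0` transports the sign
through `A`, since `det (A a, A b) = det A · det (a, b)`.
-/

section Taylor

variable {E F : Type*} [NormedAddCommGroup E] [NormedSpace ℝ E]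
  [NormedAddCommGroup F] [NormedSpace ℝ F]

theorem Convex.norm_image_sub_sub_fderiv_le {s : Set E} (hs : Convex ℝ s) {f : E → F}
    {f' : E → E →L[ℝ] F} {f'' : E → E →L[ℝ] E →L[ℝ] F} {M : ℝ}
    (hf : ∀ z ∈ s, HasFDerivWithinAt f (f' z) s z)
    (hf' : ∀ z ∈ s, HasFDerivWithinAt f' (f'' z) s z) (hM : ∀ z ∈ s, ‖f'' z‖ ≤ M)
    {x y : E} (hx : x ∈ s) (hy : y ∈ s) :
    ‖f y - f x - f' x (y - x)‖ ≤ M / 2 * ‖y - x‖ ^ 2 := by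
  set v := y - x
  set γ : ℝ → E := fun t => x + t • v
  have hγs : Set.MapsTo γ (Set.Icc 0 1) s := fun t ht => hs.add_smul_sub_mem hx hy ht
  have hγ : ∀ t, HasDerivAt γ v t := fun t =>
    (((hasDerivAt_id t).smul_const v).const_add x).congr_deriv (one_smul ℝ v)
  set g : ℝ → F := fun t => f (γ t) - f x - t • f' x v
  have hg : ∀ t ∈ Set.Icc (0 : ℝ) 1,
      HasDerivWithinAt g ((f' (γ t) - f' x) v) (Set.Icc 0 1) t := fun t ht =>
    ((((hf _ (hγs ht)).comp_hasDerivWithinAt t (hγ t).hasDerivWithinAt hγs).sub_const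
      (f x)).sub ((hasDerivAt_id t).smul_const (f' x v)).hasDerivWithinAt).congr_deriv
      (by rw [one_smul]; rfl)
  have hbound : ∀ t ∈ Set.Ico (0 : ℝ) 1, ‖(f' (γ t) - f' x) v‖ ≤ M * ‖v‖ ^ 2 * t := by
    intro t ht
    have hlip : ‖f' (γ t) - f' x‖ ≤ M * ‖γ t - x‖ :=
      hs.norm_image_sub_le_of_norm_hasFDerivWithin_le hf' hM hx (hγs (Set.Ico_subset_Icc_self ht))
    calc ‖(f' (γ t) - f' x) v‖ ≤ ‖f' (γ t) - f' x‖ * ‖v‖ := ContinuousLinearMap.le_opNorm _ v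
      _ ≤ M * ‖γ t - x‖ * ‖v‖ := by gcongr
      _ = M * ‖v‖ ^ 2 * t := by simp [γ, norm_smul, abs_of_nonneg ht.1]; ring
  have hB : ∀ t, HasDerivAt (fun t => M * ‖v‖ ^ 2 / 2 * t ^ 2) (M * ‖v‖ ^ 2 * t) t := fun t =>
    ((hasDerivAt_pow 2 t).const_mul (M * ‖v‖ ^ 2 / 2)).congr_deriv (by ring)
  have := image_norm_le_of_norm_deriv_right_le_deriv_boundary
    (fun t ht => (hg t ht).continuousWithinAt)
    (fun t ht => ((hg t (Set.Ico_subset_Icc_self ht)).mono_of_mem_nhdsWithin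
      (Icc_mem_nhdsGE_of_mem ⟨ht.1, ht.2⟩)).mono le_rfl) (by simp [g, γ]) hB hbound
    (Set.right_mem_Icc.mpr zero_le_one)
  simp only [g, γ, v, one_smul, add_sub_cancel, one_pow, mul_one] at this
  linarith

theorem ContDiffOn.norm_image_sub_sub_fderiv_le {Ω s : Set E} {f : E → F} {M : ℝ}
    (hf : ContDiffOn ℝ 2 f Ω) (hΩ : IsOpen Ω) (hs : Convex ℝ s) (hsΩ : s ⊆ Ω)
    (hM : ∀ z ∈ s, ‖fderiv ℝ (fderiv ℝ f) z‖ ≤ M) {x y : E} (hx : x ∈ s) (hy : y ∈ s) :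
    ‖f y - f x - fderiv ℝ f x (y - x)‖ ≤ M / 2 * ‖y - x‖ ^ 2 := by
  have hf' : ContDiffOn ℝ 1 (fderiv ℝ f) Ω := hf.fderiv_of_isOpen hΩ (by norm_num)
  refine hs.norm_image_sub_sub_fderiv_le (fun z hz => ?_) (fun z hz => ?_) hM hx hy
  · exact ((hf.differentiableOn (by norm_num) z (hsΩ hz)).differentiableAt
      (hΩ.mem_nhds (hsΩ hz))).hasFDerivAt.hasFDerivWithinAt
  · exact ((hf'.differentiableOn one_ne_zero z (hsΩ hz)).differentiableAt
      (hΩ.mem_nhds (hsΩ hz))).hasFDerivAt.hasFDerivWithinAt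

end Taylor

lemma sminCLM_mul_norm_le (B : E2 →L[ℝ] E2) (u : E2) : sminCLM B * ‖u‖ ≤ ‖B u‖ := by
  rcases eq_or_ne u 0 with rfl | hu
  · simp
  have hu' : 0 < ‖u‖ := norm_pos_iff.mpr hu
  have hunit : ‖‖u‖⁻¹ • u‖ = 1 := by rw [norm_smul, norm_inv, norm_norm, inv_mul_cancel₀ hu'.ne']
  have hle : sminCLM B ≤ ‖B (‖u‖⁻¹ • u)‖ :=
    csInf_le ⟨0, by rintro r ⟨x, -, rfl⟩; positivity⟩ ⟨_, hunit, rfl⟩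
  rwa [map_smul, norm_smul, norm_inv, norm_norm, le_inv_mul_iff₀ hu', mul_comm] at hle

namespace Plane

def cross (u w : E2) : ℝ := u 0 * w 1 - u 1 * w 0

lemma cross_eq_det (u w : E2) :
    cross u w = (EuclideanSpace.basisFun (Fin 2) ℝ).toBasis.det ![u, w] := by
  rw [Module.Basis.det_apply, Matrix.det_fin_two]
  simp only [cross, Module.Basis.toMatrix_apply, Matrix.cons_val_zero, Matrix.cons_val_one,
    OrthonormalBasis.coe_toBasis_repr_apply, EuclideanSpace.basisFun_repr, sub_right_inj]
  ring

lemma cross_map (B : E2 →ₗ[ℝ] E2) (u w : E2) :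
    cross (B u) (B w) = LinearMap.det B * cross u w := by
  rw [cross_eq_det, cross_eq_det, ← Module.Basis.det_comp]
  congr 1
  ext i : 1
  fin_cases i <;> rfl

lemma cross_sq_add_inner_sq (u w : E2) :
    cross u w ^ 2 + inner ℝ u w ^ 2 = ‖u‖ ^ 2 * ‖w‖ ^ 2 := by
  simp only [EuclideanSpace.norm_sq_eq, Real.norm_eq_abs, sq_abs, cross,
    EuclideanSpace.inner_eq_star_dotProduct, dotProduct, Fin.sum_univ_two, Pi.star_apply,
    star_trivial]
  ring

lemma abs_cross_le (u w : E2) : |cross u w| ≤ ‖u‖ * ‖w‖ := by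
  apply abs_le_of_sq_le_sq _ (by positivity)
  nlinarith [cross_sq_add_inner_sq u w, sq_nonneg (inner ℝ u w)]

lemma abs_cross_of_inner_eq_zero {u w : E2} (h : inner ℝ u w = 0) :
    |cross u w| = ‖u‖ * ‖w‖ := by
  rw [← sq_eq_sq₀ (abs_nonneg _) (by positivity), sq_abs, mul_pow, ← cross_sq_add_inner_sq, h]
  ring

lemma cross_add_add_ge (a b s t : E2) :
    cross a b - (‖a‖ * ‖t‖ + ‖s‖ * ‖b‖ + ‖s‖ * ‖t‖) ≤ cross (a + s) (b + t) := by
  have hexp : cross (a + s) (b + t) = cross a b + cross a t + cross s b + cross s t := by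
    simp only [cross, PiLp.add_apply]; ring
  rw [hexp]
  linarith [neg_abs_le (cross a t), neg_abs_le (cross s b), neg_abs_le (cross s t),
    abs_cross_le a t, abs_cross_le s b, abs_cross_le s t]

lemma cross_pos_of_approx {A : E2 →L[ℝ] E2} (hA : 0 < LinearMap.det (A : E2 →ₗ[ℝ] E2))
    {σ : ℝ} (hσ : 0 < σ) (hAσ : ∀ u, σ * ‖u‖ ≤ ‖A u‖) {a b p q : E2} {h ε : ℝ}
    (ha : ‖a‖ ≤ h) (hb : ‖b‖ ≤ h) (hp : ‖p - A a‖ ≤ ε) (hq : ‖q - A b‖ ≤ ε)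
    (hε : 2 * h * (ε / σ) + (ε / σ) ^ 2 < cross a b) : 0 < cross p q := by
  have hsurj : Function.Surjective A :=
    ((Module.End.isUnit_iff _).mp ((LinearMap.isUnit_iff_isUnit_det _).mpr hA.ne'.isUnit)).2
  obtain ⟨u, rfl⟩ := hsurj p
  obtain ⟨w, rfl⟩ := hsurj q
  have preimage_close : ∀ x y, ‖A y - A x‖ ≤ ε → ‖y - x‖ ≤ ε / σ := fun x y hxy => by
    rw [le_div_iff₀ hσ, mul_comm]
    exact (hAσ (y - x)).trans (by rwa [map_sub])
  have hu := preimage_close a u hp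
  have hw := preimage_close b w hq
  have hh : 0 ≤ h := (norm_nonneg a).trans ha
  have hr : 0 ≤ ε / σ := (norm_nonneg _).trans hu
  have hperturb := cross_add_add_ge a b (u - a) (w - b)
  rw [add_sub_cancel, add_sub_cancel] at hperturb
  have herr : ‖a‖ * ‖w - b‖ + ‖u - a‖ * ‖b‖ + ‖u - a‖ * ‖w - b‖
      ≤ 2 * h * (ε / σ) + (ε / σ) ^ 2 := by
    calc _ ≤ h * (ε / σ) + ε / σ * h + ε / σ * (ε / σ) := by gcongr
      _ = _ := by ring
  rw [show cross (A u) (A w) = _ from cross_map A u w]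
  exact mul_pos hA (by linarith)

lemma triDet_eq_cross_of_mem {p a b q : E2} (hq : q ∈ line[ℝ, a, b]) :
    triDet p a b = cross (q - p) (b - a) := by
  obtain ⟨t, rfl⟩ := mem_affineSpan_pair_iff_exists_lineMap_eq.mp hq
  simp only [triDet, cross, AffineMap.lineMap_apply_module, PiLp.add_apply, PiLp.sub_apply,
    PiLp.smul_apply, smul_eq_mul]
  ring

lemma infDist_affineSpan_pair_mul_dist (p a b : E2) :
    Metric.infDist p line[ℝ, a, b] * dist a b = |triDet p a b| := by
  rcases eq_or_ne a b with rfl | hab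
  · simp [triDet, mul_comm]
  have hd : 0 < dist a b := dist_pos.mpr hab
  rw [← eq_div_iff hd.ne']
  apply le_antisymm
  · -- `lineMap a b t` is the foot of the perpendicular from `p`
    set t := inner ℝ (p - a) (b - a) / ‖b - a‖ ^ 2
    have hq : AffineMap.lineMap a b t ∈ line[ℝ, a, b] :=
      AffineMap.lineMap_mem_affineSpan_pair _ _ _
    have horth : inner ℝ (AffineMap.lineMap a b t - p) (b - a) = 0 := by
      have hba : ‖b - a‖ ≠ 0 := norm_ne_zero_iff.mpr (sub_ne_zero.mpr hab.symm)
      rw [AffineMap.lineMap_apply_module', add_sub_assoc, ← neg_sub p a, ← sub_eq_add_neg,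
        inner_sub_left, real_inner_smul_left, real_inner_self_eq_norm_sq,
        div_mul_cancel₀ _ (pow_ne_zero 2 hba), sub_self]
    refine (Metric.infDist_le_dist_of_mem hq).trans_eq ?_
    rw [triDet_eq_cross_of_mem hq, abs_cross_of_inner_eq_zero horth, dist_eq_norm_sub',
      dist_eq_norm_sub', mul_div_cancel_right₀ _ (norm_pos_iff.mpr (sub_ne_zero.mpr hab.symm)).ne']
  · rw [Metric.le_infDist ⟨a, left_mem_affineSpan_pair ℝ a b⟩]
    intro q hq
    rw [div_le_iff₀ hd, triDet_eq_cross_of_mem hq, dist_eq_norm_sub', dist_eq_norm_sub' a]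
    exact abs_cross_le _ _

lemma triDet_rotate (v₁ v₂ v₃ : E2) : triDet v₃ v₁ v₂ = triDet v₁ v₂ v₃ := by
  simp only [triDet, PiLp.sub_apply]; ring

lemma triDet_swap (v₁ v₂ v₃ : E2) : triDet v₂ v₁ v₃ = -triDet v₁ v₂ v₃ := by
  simp only [triDet, PiLp.sub_apply]; ring

section Triangle

variable {v₁ v₂ v₃ : E2}

lemma minAlt_pos (h : triDet v₁ v₂ v₃ ≠ 0) : 0 < minAlt v₁ v₂ v₃ := by
  have altitude_pos : ∀ p a b : E2, triDet p a b ≠ 0 → 0 < Metric.infDist p line[ℝ, a, b] :=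
    fun p a b hp => pos_of_mul_pos_left
      ((infDist_affineSpan_pair_mul_dist p a b).symm ▸ abs_pos.mpr hp) dist_nonneg
  refine lt_min (altitude_pos _ _ _ h) (lt_min (altitude_pos _ _ _ ?_) (altitude_pos _ _ _ ?_))
  · rwa [triDet_swap, neg_ne_zero]
  · rwa [triDet_rotate]

lemma norm_sub_le_maxSide :
    ‖v₂ - v₁‖ ≤ maxSide v₁ v₂ v₃ ∧ ‖v₃ - v₁‖ ≤ maxSide v₁ v₂ v₃ := by
  rw [← dist_eq_norm', ← dist_eq_norm']
  exact ⟨le_max_left _ _, (le_max_right _ _).trans (le_max_right _ _)⟩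

lemma minAlt_le_maxSide : minAlt v₁ v₂ v₃ ≤ maxSide v₁ v₂ v₃ :=
  calc minAlt v₁ v₂ v₃ ≤ Metric.infDist v₁ line[ℝ, v₂, v₃] := min_le_left _ _
    _ ≤ dist v₁ v₂ := Metric.infDist_le_dist_of_mem (left_mem_affineSpan_pair ℝ v₂ v₃)
    _ ≤ maxSide v₁ v₂ v₃ := le_max_left _ _

lemma minAlt_mul_maxSide_le : minAlt v₁ v₂ v₃ * maxSide v₁ v₂ v₃ ≤ |triDet v₁ v₂ v₃| := by
  have hm : 0 ≤ minAlt v₁ v₂ v₃ :=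
    le_min Metric.infDist_nonneg (le_min Metric.infDist_nonneg Metric.infDist_nonneg)
  rw [maxSide, mul_max_of_nonneg _ _ hm, mul_max_of_nonneg _ _ hm]
  refine max_le ?_ (max_le ?_ ?_)
  · calc minAlt v₁ v₂ v₃ * dist v₁ v₂ ≤ Metric.infDist v₃ line[ℝ, v₁, v₂] * dist v₁ v₂ := by
          gcongr; exact (min_le_right _ _).trans (min_le_right _ _)
      _ = |triDet v₁ v₂ v₃| := by rw [infDist_affineSpan_pair_mul_dist, triDet_rotate]
  · calc minAlt v₁ v₂ v₃ * dist v₂ v₃ ≤ Metric.infDist v₁ line[ℝ, v₂, v₃] * dist v₂ v₃ := by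
          gcongr; exact min_le_left _ _
      _ = |triDet v₁ v₂ v₃| := infDist_affineSpan_pair_mul_dist _ _ _
  · calc minAlt v₁ v₂ v₃ * dist v₁ v₃ ≤ Metric.infDist v₂ line[ℝ, v₁, v₃] * dist v₁ v₃ := by
          gcongr; exact (min_le_right _ _).trans (min_le_left _ _)
      _ = |triDet v₁ v₂ v₃| := by rw [infDist_affineSpan_pair_mul_dist, triDet_swap, abs_neg]

end Triangle

end Plane

open Plane in
/-- Theorem on avoiding element reversal: if `f` is `C²` on `Ω` with
nonsingular, orientation-preserving Jacobian, `T ⊆ Ω` is a positively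
oriented triangle with vertices `v₁ v₂ v₃`, `M` bounds `‖∇²f‖` on `T`, and
`σ_min(∇f(v₁))/M > 2 h asp(T)`, then the image triangle is not reversed. -/
theorem no_reversal_of_smin_gt
    (Ω : Set E2) (hΩ : IsOpen Ω) (f : E2 → E2)
    (hf : ContDiffOn ℝ 2 f Ω)
    (hns : ∀ x ∈ Ω, 0 < LinearMap.det ((fderiv ℝ f x : E2 →L[ℝ] E2) : E2 →ₗ[ℝ] E2))
    (v₁ v₂ v₃ : E2)
    (hT : convexHull ℝ {v₁, v₂, v₃} ⊆ Ω)
    (horient : 0 < triDet v₁ v₂ v₃)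
    (M : ℝ)
    (hM : ∀ x ∈ convexHull ℝ {v₁, v₂, v₃}, ‖fderiv ℝ (fderiv ℝ f) x‖ ≤ M)
    (hcond : sminCLM (fderiv ℝ f v₁) / M > 2 * maxSide v₁ v₂ v₃ * aspectRatio v₁ v₂ v₃) :
    0 < triDet (f v₁) (f v₂) (f v₃) := by
  set σ := sminCLM (fderiv ℝ f v₁)
  set h := maxSide v₁ v₂ v₃
  set m := minAlt v₁ v₂ v₃
  have hvert : ∀ v ∈ ({v₁, v₂, v₃} : Set E2), v ∈ convexHull ℝ {v₁, v₂, v₃} :=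
    subset_convexHull ℝ _
  have hv₁ := hvert v₁ (by simp)
  have hm : 0 < m := minAlt_pos horient.ne'
  have hmh : m ≤ h := minAlt_le_maxSide
  have hh : 0 < h := hm.trans_le hmh
  have hσM : 0 < σ / M := hcond.trans' (by unfold aspectRatio; positivity)
  have hM0 : 0 < M := ((norm_nonneg (fderiv ℝ (fderiv ℝ f) v₁)).trans (hM v₁ hv₁)).lt_of_ne
    (by rintro rfl; simp at hσM)
  have hσ : 0 < σ := (div_pos_iff_of_pos_right hM0).mp hσM
  set r := M / 2 * h ^ 2 / σ
  have hr : 4 * r < m := by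
    have key : 2 * h * (h / m) * M < σ := (lt_div_iff₀ hM0).mp hcond
    rw [mul_div_assoc', div_mul_eq_mul_div, div_lt_iff₀ hm] at key
    rw [← mul_div_assoc, div_lt_iff₀ hσ]
    linarith
  obtain ⟨he₂, he₃⟩ : ‖v₂ - v₁‖ ≤ h ∧ ‖v₃ - v₁‖ ≤ h := norm_sub_le_maxSide
  have htaylor : ∀ v ∈ ({v₂, v₃} : Set E2), ‖v - v₁‖ ≤ h →
      ‖f v - f v₁ - fderiv ℝ f v₁ (v - v₁)‖ ≤ M / 2 * h ^ 2 := fun v hv hvh =>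
    (hf.norm_image_sub_sub_fderiv_le hΩ (convex_convexHull ℝ _) hT hM hv₁
      (hvert v (Set.mem_insert_of_mem _ hv))).trans (by gcongr)
  refine cross_pos_of_approx (hns v₁ (hT hv₁)) hσ (sminCLM_mul_norm_le _) he₂ he₃
    (htaylor v₂ (by simp) he₂) (htaylor v₃ (by simp) he₃) ?_
  have hD : m * h ≤ triDet v₁ v₂ v₃ := minAlt_mul_maxSide_le.trans_eq (abs_of_pos horient)
  have hr0 : 0 ≤ r := by positivity
  change 2 * h * r + r ^ 2 < triDet v₁ v₂ v₃
  nlinarith [mul_lt_mul_of_pos_left hr hh, mul_le_mul_of_nonneg_left hr.le hr0,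
    mul_le_mul_of_nonneg_left hmh hr0]
end
end

section
/- Let T be a triangle in ℝ² with vertices v₁, v₂, v₃ in positive orientation, and let A = (v₂ − v₁, v₃ − v₁) be the 2×2 matrix with those columns. Then the smallest singular value of A satisfies σ_min(A) ≥ minalt(T)/√2, where minalt(T) is the minimum altitude length of T. -/
noncomputable section

/-- Smallest singular value of a 2×2 real matrix (with the Euclidean norm). -/
def sminMat (A : Matrix (Fin 2) (Fin 2) ℝ) : ℝ :=
  sInf {r : ℝ | ∃ x : EuclideanSpace ℝ (Fin 2), ‖x‖ = 1 ∧ r = ‖Matrix.toEuclideanLin A x‖}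

/-!
For a unit vector `x`, `A x = x₀ (v₂ - v₁) + x₁ (v₃ - v₁)`. If `x₀ ≠ 0` this is
`x₀ (v₂ - w)` for the point `w = v₁ - (x₁ / x₀) (v₃ - v₁)` on the line `v₁ v₃`, so
`‖A x‖ ≥ |x₀| h₂` with `h₂` the altitude from `v₂`; symmetrically `‖A x‖ ≥ |x₁| h₃`.
Since `x` is a unit vector of `ℝ²`, one of `|x₀|, |x₁|` is at least `1 / √2`.
-/

theorem abs_mul_infDist_affineSpan_pair_le {V P : Type*} [NormedAddCommGroup V]
    [NormedSpace ℝ V] [MetricSpace P] [NormedAddTorsor V P] (p q r : P) (s t : ℝ) :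
    |s| * Metric.infDist p (affineSpan ℝ {q, r}) ≤ ‖s • (p -ᵥ q) + t • (r -ᵥ q)‖ := by
  rcases eq_or_ne s 0 with rfl | hs
  · simp
  have hfoot : s • (p -ᵥ q) + t • (r -ᵥ q) = s • (p -ᵥ AffineMap.lineMap q r (-t / s)) := by
    rw [← vsub_sub_vsub_cancel_right p (AffineMap.lineMap q r (-t / s)) q,
      AffineMap.lineMap_vsub_left, smul_sub, smul_smul, mul_div_cancel₀ _ hs, neg_smul,
      sub_neg_eq_add]
  rw [hfoot, norm_smul, Real.norm_eq_abs, ← dist_eq_norm_vsub]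
  exact mul_le_mul_of_nonneg_left
    (Metric.infDist_le_dist_of_mem (AffineMap.lineMap_mem_affineSpan_pair _ q r)) (abs_nonneg s)

theorem EuclideanSpace.exists_norm_le_sqrt_card_mul_abs {ι : Type*} [Fintype ι] [Nonempty ι]
    (x : EuclideanSpace ℝ ι) : ∃ i, ‖x‖ ≤ √(Fintype.card ι) * |x i| := by
  obtain ⟨i, -, hi⟩ := Finset.exists_max_image Finset.univ (fun j ↦ |x j|) Finset.univ_nonempty
  refine ⟨i, ?_⟩
  rw [EuclideanSpace.norm_eq, ← Real.sqrt_sq (abs_nonneg (x i)), ← Real.sqrt_mul (by positivity)]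
  gcongr
  calc ∑ j, ‖x j‖ ^ 2 ≤ ∑ _j : ι, |x i| ^ 2 := by
        gcongr with j hj
        exact hi j hj
    _ = Fintype.card ι * |x i| ^ 2 := by simp

theorem toEuclideanLin_of_columns_apply (u w x : E2) :
    Matrix.toEuclideanLin (Matrix.of ![![u 0, w 0], ![u 1, w 1]]) x = x 0 • u + x 1 • w := by
  ext i
  fin_cases i <;>
    simp [Matrix.toLpLin_apply, dotProduct, Fin.sum_univ_two, mul_comm]

theorem abs_mul_minAlt_le_norm_smul_add_smul (v₁ v₂ v₃ : E2) (x : E2) (i : Fin 2) :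
    |x i| * minAlt v₁ v₂ v₃ ≤ ‖x 0 • (v₂ - v₁) + x 1 • (v₃ - v₁)‖ := by
  fin_cases i
  · calc |x 0| * minAlt v₁ v₂ v₃
        ≤ |x 0| * Metric.infDist v₂ (affineSpan ℝ {v₁, v₃}) := by
          gcongr
          exact (min_le_right _ _).trans (min_le_left _ _)
      _ ≤ _ := abs_mul_infDist_affineSpan_pair_le v₂ v₁ v₃ (x 0) (x 1)
  · calc |x 1| * minAlt v₁ v₂ v₃
        ≤ |x 1| * Metric.infDist v₃ (affineSpan ℝ {v₁, v₂}) := by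
          gcongr
          exact (min_le_right _ _).trans (min_le_right _ _)
      _ ≤ ‖x 1 • (v₃ - v₁) + x 0 • (v₂ - v₁)‖ :=
          abs_mul_infDist_affineSpan_pair_le v₃ v₁ v₂ (x 1) (x 0)
      _ = _ := by rw [add_comm]

theorem minAlt_nonneg (v₁ v₂ v₃ : E2) : 0 ≤ minAlt v₁ v₂ v₃ :=
  le_min Metric.infDist_nonneg (le_min Metric.infDist_nonneg Metric.infDist_nonneg)

theorem smin_ge_minAlt_div_sqrt_two_general
    (v₁ v₂ v₃ : E2) :
    sminMat (Matrix.of ![![(v₂ - v₁) 0, (v₃ - v₁) 0], ![(v₂ - v₁) 1, (v₃ - v₁) 1]]) ≥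
      minAlt v₁ v₂ v₃ / Real.sqrt 2 := by
  refine le_csInf ⟨_, EuclideanSpace.single 0 1, by simp, rfl⟩ ?_
  rintro _ ⟨x, hx, rfl⟩
  obtain ⟨i, hi⟩ := EuclideanSpace.exists_norm_le_sqrt_card_mul_abs x
  rw [hx, Fintype.card_fin, Nat.cast_ofNat] at hi
  rw [toEuclideanLin_of_columns_apply, div_le_iff₀ (by positivity)]
  have hm := minAlt_nonneg v₁ v₂ v₃
  calc minAlt v₁ v₂ v₃ ≤ √2 * |x i| * minAlt v₁ v₂ v₃ := le_mul_of_one_le_left hm hi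
    _ ≤ √2 * ‖x 0 • (v₂ - v₁) + x 1 • (v₃ - v₁)‖ := by
      rw [mul_assoc]
      gcongr
      exact abs_mul_minAlt_le_norm_smul_add_smul v₁ v₂ v₃ x i
    _ = _ := mul_comm _ _

/-- For a positively oriented triangle with vertices `v₁ v₂ v₃`, the matrix
`A = (v₂ − v₁, v₃ − v₁)` (with these vectors as columns) satisfies
`σ_min(A) ≥ minalt(T)/√2`. -/
theorem smin_ge_minAlt_div_sqrt_two
    (v₁ v₂ v₃ : E2)
    (horient : 0 < triDet v₁ v₂ v₃) :
    sminMat (Matrix.of ![![(v₂ - v₁) 0, (v₃ - v₁) 0], ![(v₂ - v₁) 1, (v₃ - v₁) 1]]) ≥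
      minAlt v₁ v₂ v₃ / Real.sqrt 2 :=
  smin_ge_minAlt_div_sqrt_two_general v₁ v₂ v₃

end
end

section
/- With a = (cos θ − rs)/(1−r²), b = (rs − r² cos θ)/(1−r²), c = sin θ/(1−r²), d = −r² sin θ/(1−r²), and 0 < r ≤ s < 1, the minimum over the annulus r ≤ √(x²+y²) ≤ 1 of the Jacobian determinant a² + c² − (b²+d²)/(x²+y²)² of the map φ(x,y) = (Ax+By, −Bx+Ay) (with A = a + b/(x²+y²), B = c + d/(x²+y²)) is attained at x²+y² = r², and this minimum is nonpositive if and only if 2r cos θ − r²s − s ≤ 0. Equivalently, φ is orientation-preserving on the whole annulus if and only if 2r cos θ > r²s + s. -/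
/-!
The Jacobian is `a² + c² − (b² + d²)/ρ⁴` with `ρ² = x² + y²`, which increases with `ρ`, so over the
annulus it is smallest on the inner circle `ρ = r`. There, substituting the constants and using
`cos² θ + sin² θ = 1`, it equals `s (2 r cos θ − r² s − s) / (r² (1 − r²))`, whose sign is that of
`2 r cos θ − r² s − s` because `s > 0` and `0 < r < 1`.
-/

open Real

theorem IsMinOn.forall_pos_iff {α β : Type*} [Preorder β] [Zero β] {f : α → β} {S : Set α} {a : α}
    (hmin : IsMinOn f S a) (ha : a ∈ S) : (∀ x ∈ S, 0 < f x) ↔ 0 < f a :=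
  ⟨fun h => h a ha, fun h x hx => h.trans_le (isMinOn_iff.1 hmin x hx)⟩

theorem sub_div_sq_le_sub_div_sq {A K u v : ℝ} (hK : 0 ≤ K) (hv : 0 < v) (hvu : v ≤ u) :
    A - K / v ^ 2 ≤ A - K / u ^ 2 :=
  sub_le_sub_left (div_le_div_of_nonneg_left hK (by positivity) (pow_le_pow_left₀ hv.le hvu 2)) A

theorem femwarp_jacobian_at_inner_radius {r s : ℝ} (θ : ℝ) (hr : r ≠ 0) (hr1 : 1 - r ^ 2 ≠ 0) :
    ((cos θ - r * s) / (1 - r ^ 2)) ^ 2 + (sin θ / (1 - r ^ 2)) ^ 2 -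
        (((r * s - r ^ 2 * cos θ) / (1 - r ^ 2)) ^ 2 + (-(r ^ 2 * sin θ) / (1 - r ^ 2)) ^ 2) /
          (r ^ 2) ^ 2 =
      s * (2 * r * cos θ - r ^ 2 * s - s) / (r ^ 2 * (1 - r ^ 2)) := by
  field_simp
  ring

theorem mul_div_nonpos_iff_of_pos {K : Type*} [Field K] [LinearOrder K] [IsStrictOrderedRing K]
    {s D : K} (X : K) (hs : 0 < s) (hD : 0 < D) :
    s * X / D ≤ 0 ↔ X ≤ 0 := by
  rw [div_le_iff₀ hD, zero_mul]
  simpa using mul_le_mul_iff_right₀ (b := X) (c := 0) hs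

/-- For the continuum-FEMWARP annulus map with constants determined by the
boundary conditions, the Jacobian determinant `a² + c² − (b²+d²)/(x²+y²)²` is
minimized over the annulus at `x²+y² = r²`; its minimum is nonpositive iff
`2r cos θ − r²s − s ≤ 0`; equivalently the map is orientation-preserving on
the whole annulus iff `2r cos θ > r²s + s`. -/
theorem annulus_reversal_criterion
    (r s θ : ℝ) (hr : 0 < r) (hrs : r ≤ s) (hs1 : s < 1) :
    let a := (Real.cos θ - r * s) / (1 - r ^ 2)
    let b := (r * s - r ^ 2 * Real.cos θ) / (1 - r ^ 2)
    let c := Real.sin θ / (1 - r ^ 2)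
    let d := -(r ^ 2 * Real.sin θ) / (1 - r ^ 2)
    let J : ℝ × ℝ → ℝ := fun p =>
      a ^ 2 + c ^ 2 - (b ^ 2 + d ^ 2) / (p.1 ^ 2 + p.2 ^ 2) ^ 2
    let Ann : Set (ℝ × ℝ) := {p | r ≤ Real.sqrt (p.1 ^ 2 + p.2 ^ 2) ∧
      Real.sqrt (p.1 ^ 2 + p.2 ^ 2) ≤ 1}
    -- the minimum is attained where `x² + y² = r²`:
    (∀ p ∈ Ann, a ^ 2 + c ^ 2 - (b ^ 2 + d ^ 2) / (r ^ 2) ^ 2 ≤ J p) ∧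
    (∀ p ∈ Ann, p.1 ^ 2 + p.2 ^ 2 = r ^ 2 →
      J p = a ^ 2 + c ^ 2 - (b ^ 2 + d ^ 2) / (r ^ 2) ^ 2) ∧
    -- the minimum is nonpositive iff `2r cos θ − r²s − s ≤ 0`:
    (a ^ 2 + c ^ 2 - (b ^ 2 + d ^ 2) / (r ^ 2) ^ 2 ≤ 0 ↔
      2 * r * Real.cos θ - r ^ 2 * s - s ≤ 0) ∧
    -- equivalently, orientation preservation on the whole annulus:
    ((∀ p ∈ Ann, 0 < J p) ↔ 2 * r * Real.cos θ > r ^ 2 * s + s) := by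
  intro a b c d J Ann
  have hr1 : 0 < 1 - r ^ 2 := by nlinarith
  have hJr : J (r, 0) = a ^ 2 + c ^ 2 - (b ^ 2 + d ^ 2) / (r ^ 2) ^ 2 := by simp [J]
  have hmem : ((r, 0) : ℝ × ℝ) ∈ Ann := by
    simp only [Ann, Set.mem_ofPred_eq, zero_pow two_ne_zero, add_zero, sqrt_sq hr.le]
    exact ⟨le_rfl, by linarith⟩
  have hmin : IsMinOn J Ann (r, 0) := isMinOn_iff.2 fun p hp => by
    rw [hJr]
    exact sub_div_sq_le_sub_div_sq (by positivity) (by positivity) ((le_sqrt' hr).1 hp.1)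
  have hsign : a ^ 2 + c ^ 2 - (b ^ 2 + d ^ 2) / (r ^ 2) ^ 2 ≤ 0 ↔
      2 * r * cos θ - r ^ 2 * s - s ≤ 0 := by
    rw [femwarp_jacobian_at_inner_radius θ hr.ne' hr1.ne']
    exact mul_div_nonpos_iff_of_pos _ (hr.trans_le hrs) (by positivity)
  refine ⟨fun p hp => hJr ▸ isMinOn_iff.1 hmin p hp, fun p _ hp => by simp only [J, hp], hsign, ?_⟩
  rw [hmin.forall_pos_iff hmem, hJr, ← not_le, hsign, not_le]
  constructor <;> intro h <;> linarith
end
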